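/- Let A be a simple finite-dimensional algebra over a field F of characteristic zero with a comultiplication Δ such that the Drinfeld double D(A) is a direct sum A₁ ⊕ A₂ of two proper simple ideals, and let φ₁, φ₂ : A* → A be the linear maps with f − φᵢ(f) ∈ Aᵢ for all f ∈ A*. Then for every a ∈ A there exists a unique f ∈ A* such that a = −φ₁(f) + φ₂(f); consequently the map ψ : A → A* defined by ψ(a) = f is a linear bijection. -/

import Mathlib

/-! If `-φ₁ f + φ₂ f = 0`, then `(-φ₁ f, f)` lies in `A₁ ⊓ A₂ = ⊥`, so `f = 0`. Hence
`φ₂ - φ₁ : A* → A` is injective, and it is bijective because `A*` and `A` have the same finite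
dimension; `ψ` is its inverse. -/

open TensorProduct

/-- `I` is a (two-sided) ideal for the product `prod`. -/
def IsIdealP {F M : Type*} [Field F] [AddCommGroup M] [Module F M]
    (prod : M → M → M) (I : Submodule F M) : Prop :=
  ∀ x ∈ I, ∀ y : M, prod x y ∈ I ∧ prod y x ∈ I

/-- The ideal `I` is simple as an algebra with the restricted product. -/
def IsSimpleIdealP {F M : Type*} [Field F] [AddCommGroup M] [Module F M]
    (prod : M → M → M) (I : Submodule F M) : Prop :=
  (∃ x ∈ I, ∃ y ∈ I, prod x y ≠ 0) ∧
    ∀ J : Submodule F M, J ≤ I →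
      (∀ x ∈ J, ∀ y ∈ I, prod x y ∈ J ∧ prod y x ∈ J) → J = ⊥ ∨ J = I

/-- The multiplication of the Drinfeld double `D(A) = A ⊕ A*` associated with the
bilinear product `mul` and the comultiplication `Δ`:
`(a + f)(b + g) = (ab + f⇀b + a↼g) + (fg + f⇽b + a⇁g)`. -/
noncomputable def dmul {F A : Type*} [Field F] [AddCommGroup A] [Module F A]
    (mul : A →ₗ[F] A →ₗ[F] A) (Δ : A →ₗ[F] A ⊗[F] A)
    (p q : A × Module.Dual F A) : A × Module.Dual F A :=
  (mul p.1 q.1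
      + TensorProduct.rid F A (LinearMap.lTensor A p.2 (Δ q.1))
      + TensorProduct.lid F A (LinearMap.rTensor A q.2 (Δ p.1)),
    Δ.dualMap (TensorProduct.dualDistrib F A A (p.2 ⊗ₜ[F] q.2))
      + p.2.comp (mul q.1)
      + q.2.comp (mul.flip p.1))

theorem injective_sub_of_disjoint {R M N : Type*} [Ring R] [AddCommGroup M] [Module R M]
    [AddCommGroup N] [Module R N] {A₁ A₂ : Submodule R (M × N)} (h : Disjoint A₁ A₂)
    {φ₁ φ₂ : N →ₗ[R] M} (hφ₁ : ∀ f, (-φ₁ f, f) ∈ A₁) (hφ₂ : ∀ f, (-φ₂ f, f) ∈ A₂) :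
    Function.Injective (φ₂ - φ₁) := by
  rw [← LinearMap.ker_eq_bot, LinearMap.ker_eq_bot']
  intro f hf
  have hφ : φ₂ f = φ₁ f := sub_eq_zero.mp hf
  have hmem₂ : (-φ₁ f, f) ∈ A₂ := hφ ▸ hφ₂ f
  exact congrArg Prod.snd (Submodule.disjoint_def.mp h _ (hφ₁ f) hmem₂)

theorem LinearMap.bijective_of_injective_dual {F A : Type*} [Field F] [AddCommGroup A]
    [Module F A] [FiniteDimensional F A] {L : Module.Dual F A →ₗ[F] A}
    (hL : Function.Injective L) : Function.Bijective L :=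
  ⟨hL, (injective_iff_surjective_of_finrank_eq_finrank Subspace.dual_finrank_eq).mp hL⟩

theorem stmt3_general {F A : Type*} [Field F] [AddCommGroup A] [Module F A]
    [FiniteDimensional F A]
    -- `D(A) = A₁ ⊕ A₂`, a direct sum of two proper simple ideals
    (A₁ A₂ : Submodule F (A × Module.Dual F A))
    (hcompl : IsCompl A₁ A₂)
    -- the linear maps `φᵢ` with `f - φᵢ(f) ∈ Aᵢ` for all `f ∈ A*`
    (φ₁ φ₂ : Module.Dual F A →ₗ[F] A)
    (hφ1 : ∀ f : Module.Dual F A, ((-φ₁ f, f) : A × Module.Dual F A) ∈ A₁)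
    (hφ2 : ∀ f : Module.Dual F A, ((-φ₂ f, f) : A × Module.Dual F A) ∈ A₂)
    :
    (∀ c : A, ∃! f : Module.Dual F A, c = -φ₁ f + φ₂ f) ∧
      ∃ ψ : A ≃ₗ[F] Module.Dual F A, ∀ c : A, c = -φ₁ (ψ c) + φ₂ (ψ c) := by
  have hbij : Function.Bijective (φ₂ - φ₁) :=
    LinearMap.bijective_of_injective_dual (injective_sub_of_disjoint hcompl.disjoint hφ1 hφ2)
  have happly : ∀ f, (φ₂ - φ₁) f = -φ₁ f + φ₂ f := fun f => by
    rw [LinearMap.sub_apply, neg_add_eq_sub]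
  refine ⟨fun c => ?_, ⟨(LinearEquiv.ofBijective _ hbij).symm, fun c => ?_⟩⟩
  · simpa only [happly, eq_comm] using hbij.existsUnique c
  · rw [← happly]
    exact ((LinearEquiv.ofBijective _ hbij).apply_symm_apply c).symm

theorem stmt3 {F A : Type*} [Field F] [CharZero F] [AddCommGroup A] [Module F A]
    [FiniteDimensional F A] (mul : A →ₗ[F] A →ₗ[F] A)
    -- `A` is simple
    (hsimple : (∃ x y : A, mul x y ≠ 0) ∧
      ∀ I : Submodule F A, (∀ x ∈ I, ∀ y : A, mul x y ∈ I ∧ mul y x ∈ I) → I = ⊥ ∨ I = ⊤)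
    -- a comultiplication on `A`
    (Δ : A →ₗ[F] A ⊗[F] A)
    -- `D(A) = A₁ ⊕ A₂`, a direct sum of two proper simple ideals
    (A₁ A₂ : Submodule F (A × Module.Dual F A))
    (h1b : A₁ ≠ ⊥) (h1t : A₁ ≠ ⊤) (h2b : A₂ ≠ ⊥) (h2t : A₂ ≠ ⊤)
    (hcompl : IsCompl A₁ A₂)
    (hid1 : IsIdealP (dmul mul Δ) A₁) (hid2 : IsIdealP (dmul mul Δ) A₂)
    (hs1 : IsSimpleIdealP (dmul mul Δ) A₁) (hs2 : IsSimpleIdealP (dmul mul Δ) A₂)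
    -- the linear maps `φᵢ` with `f - φᵢ(f) ∈ Aᵢ` for all `f ∈ A*`
    (φ₁ φ₂ : Module.Dual F A →ₗ[F] A)
    (hφ1 : ∀ f : Module.Dual F A, ((-φ₁ f, f) : A × Module.Dual F A) ∈ A₁)
    (hφ2 : ∀ f : Module.Dual F A, ((-φ₂ f, f) : A × Module.Dual F A) ∈ A₂)
    :
    (∀ c : A, ∃! f : Module.Dual F A, c = -φ₁ f + φ₂ f) ∧
      ∃ ψ : A ≃ₗ[F] Module.Dual F A, ∀ c : A, c = -φ₁ (ψ c) + φ₂ (ψ c) :=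
  stmt3_general A₁ A₂ hcompl φ₁ φ₂ hφ1 hφ2
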